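/- arXiv:2408.01135 — 3 statements merged into one kernel-verified Lean document; each statement's English description precedes it below -/
import Mathlib

section
/- Let X be a real Banach space. The following are equivalent: (1) X has the Schur property; (2) every bounded sequence in X has a subsequence which is either norm convergent or equivalent to the canonical basis of ℓ1; (3) every weakly precompact subset of X is relatively compact in the norm topology. -/
open Filter Topology Bornology

/-- A sequence is equivalent to the canonical basis of `ℓ₁` if there are constants
`0 < c` and `0 < C` with `c * ∑ |aᵢ| ≤ ‖∑ aᵢ • xᵢ‖ ≤ C * ∑ |aᵢ|` for all finite scalar choices. -/
def IsEquivL1Basis {X : Type*} [NormedAddCommGroup X] [NormedSpace ℝ X] (x : ℕ → X) : Prop :=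
  ∃ c C : ℝ, 0 < c ∧ 0 < C ∧ ∀ (n : ℕ) (a : Fin n → ℝ),
    c * ∑ i, |a i| ≤ ‖∑ i, a i • x (i : ℕ)‖ ∧ ‖∑ i, a i • x (i : ℕ)‖ ≤ C * ∑ i, |a i|

/-- A bounded set is weakly precompact if it contains no sequence equivalent to the
canonical basis of `ℓ₁`. -/
def WeaklyPrecompact {X : Type*} [NormedAddCommGroup X] [NormedSpace ℝ X] (A : Set X) : Prop :=
  IsBounded A ∧ ∀ x : ℕ → X, (∀ n, x n ∈ A) → ¬ IsEquivL1Basis x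

/-- A sequence is weakly Cauchy if `(f (x n))` converges for every continuous linear functional. -/
def IsWeaklyCauchy {X : Type*} [NormedAddCommGroup X] [NormedSpace ℝ X] (x : ℕ → X) : Prop :=
  ∀ f : X →L[ℝ] ℝ, ∃ l : ℝ, Tendsto (fun n => f (x n)) atTop (𝓝 l)

/-- Convergence of a sequence in the weak topology. -/
def WeaklyConvergesTo {X : Type*} [NormedAddCommGroup X] [NormedSpace ℝ X]
    (x : ℕ → X) (l : X) : Prop :=
  Tendsto (fun n => toWeakSpace ℝ X (x n)) atTop (𝓝 (toWeakSpace ℝ X l))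

/-- A set is relatively weakly compact if its closure in the weak topology is compact there. -/
def RelWeaklyCompact {X : Type*} [NormedAddCommGroup X] [NormedSpace ℝ X] (A : Set X) : Prop :=
  IsCompact (closure (toWeakSpace ℝ X '' A))

/-!
(1) ⇒ (2) is Rosenthal's ℓ₁ theorem plus the Schur property, which makes weakly Cauchy sequences
norm Cauchy. Rosenthal's theorem is proved combinatorially. For rationals `r < s`, either some
subsequence carries no norm-one functional that is infinitely often `< r` and infinitely often
`> s` on it, or a fusion argument yields a subsequence along which the sets
`{g | g (x n) < r}` and `{g | s < g (x n)}` are Boolean independent in the dual ball, and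
independence forces ℓ₁-behaviour with constant `(s - r) / 2`. Diagonalising over all rational
pairs gives a subsequence along which every functional converges.

(2) ⇒ (3): a weakly precompact set has no ℓ₁-sequences, so every sequence in it has a norm
convergent subsequence.

(3) ⇒ (1): a weakly convergent sequence is bounded (uniform boundedness) and its range contains no
ℓ₁-sequence, since a functional taking the values `(-1) ^ n` on an ℓ₁-sequence exists by
Hahn–Banach. So the range is relatively compact, and its only norm cluster point is the weak limit.
-/

lemma exists_seq_of_forall_exists {α : Type*} {P : α → Prop} {R : ℕ → α → α → Prop} {a : α}
    (ha : P a) (h : ∀ k a, P a → ∃ b, P b ∧ R k a b) :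
    ∃ f : ℕ → α, f 0 = a ∧ ∀ k, P (f k) ∧ R k (f k) (f (k + 1)) := by
  choose! F hFP hFR using h
  let f : ℕ → α := fun k => Nat.rec a F k
  have hf : ∀ k, P (f k) := fun k => Nat.rec ha (fun k hk => hFP k (f k) hk) k
  exact ⟨f, rfl, fun k => ⟨hf k, hFR k (f k) (hf k)⟩⟩

lemma exists_infinite_forall_of_forall_exists_infinite_subset {ι : Type*} [Denumerable ι]
    {P : ι → Set ℕ → Prop} (hP : ∀ i M, M.Infinite → ∃ M' ⊆ M, M'.Infinite ∧ P i M')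
    (hP_diff : ∀ i M M', P i M → (M' \ M).Finite → P i M') :
    ∃ D : Set ℕ, D.Infinite ∧ ∀ i, P i D := by
  obtain ⟨f, -, hf⟩ := exists_seq_of_forall_exists (P := fun p : Set ℕ × ℕ => p.1.Infinite)
    (R := fun k p q => q.1 ⊆ p.1 ∧ P (Denumerable.ofNat ι k) q.1 ∧ q.2 ∈ q.1 ∧ p.2 < q.2)
    (a := (Set.univ, 0)) Set.infinite_univ
    (fun k p hp => by
      obtain ⟨M', hM'M, hM', hPM'⟩ := hP _ p.1 hp
      obtain ⟨m, hm, hpm⟩ := hM'.exists_gt p.2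
      exact ⟨(M', m), hM', hM'M, hPM', hm, hpm⟩)
  set m : ℕ → ℕ := fun k => (f (k + 1)).2
  have hanti : Antitone fun k => (f k).1 := antitone_nat_of_succ_le fun k => (hf k).2.1
  have hm : StrictMono m := strictMono_nat_of_lt_succ fun k => (hf (k + 1)).2.2.2.2
  refine ⟨Set.range m, Set.infinite_range_of_injective hm.injective, fun i => ?_⟩
  set k := Encodable.encode i
  refine hP_diff i _ _ (Denumerable.ofNat_encode i ▸ (hf k).2.2.1)
    (((Set.finite_lt_nat k).image m).subset ?_)
  rintro _ ⟨⟨j, rfl⟩, hj⟩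
  refine ⟨j, show j < k from not_le.1 fun hkj => hj ?_, rfl⟩
  exact hanti (Nat.succ_le_succ hkj) (hf j).2.2.2.1

lemma isCompact_closure_of_forall_exists_tendsto {E : Type*} [PseudoMetricSpace E] {A : Set E}
    (h : ∀ a : ℕ → E, (∀ n, a n ∈ A) →
      ∃ l, ∃ φ : ℕ → ℕ, StrictMono φ ∧ Tendsto (a ∘ φ) atTop (𝓝 l)) :
    IsCompact (closure A) := by
  refine IsSeqCompact.isCompact fun y hy => ?_
  choose a ha hd using fun n =>
    Metric.mem_closure_iff.1 (hy n) (1 / (n + 1)) Nat.one_div_pos_of_nat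
  obtain ⟨l, φ, hφ, hl⟩ := h a ha
  refine ⟨l, mem_closure_of_tendsto hl (Eventually.of_forall fun n => ha (φ n)), φ, hφ,
    hl.congr_dist (squeeze_zero (fun _ => dist_nonneg) (fun k => ?_)
      (tendsto_one_div_add_atTop_nhds_zero_nat.comp hφ.tendsto_atTop))⟩
  rw [dist_comm]
  exact (hd (φ k)).le

namespace Rosenthal

variable {S : Type*} {A B : ℕ → Set S} {C : Set S} {M N : Set ℕ}

def HasOscillation (A B : ℕ → Set S) (C : Set S) (M : Set ℕ) : Prop :=
  ∃ g ∈ C, {n ∈ M | g ∈ A n}.Infinite ∧ {n ∈ M | g ∈ B n}.Infinite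

def Rich (A B : ℕ → Set S) (C : Set S) (M : Set ℕ) : Prop :=
  ∀ M' ⊆ M, M'.Infinite → HasOscillation A B C M'

lemma HasOscillation.of_diff_finite (h : HasOscillation A B C N) (hNM : (N \ M).Finite) :
    HasOscillation A B C M := by
  obtain ⟨g, hg, hA, hB⟩ := h
  have hinf : ∀ T : ℕ → Set S, {n ∈ N | g ∈ T n}.Infinite → {n ∈ M | g ∈ T n}.Infinite :=
    fun T hT => (hT.sdiff hNM).mono fun n hn => ⟨by_contra fun hM => hn.2 ⟨hn.1.1, hM⟩, hn.1.2⟩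
  exact ⟨g, hg, hinf A hA, hinf B hB⟩

lemma Rich.nonempty (h : Rich A B C M) (hM : M.Infinite) : C.Nonempty :=
  let ⟨g, hg, _⟩ := h M subset_rfl hM
  ⟨g, hg⟩

/- Pigeonhole: infinitely many `k` share one label `(c k, b k) = (C, β)`. A point of `C`
oscillating along those `n k` lies in the `β`-set of some `n j`, and it still oscillates on `M j`,
which contains all later `n k`. -/
lemma Rich.exists_hasOscillation_inter {𝒞 : Set (Set S)} {M₀ : Set ℕ} (h𝒞 : 𝒞.Finite)
    (hrich : ∀ C ∈ 𝒞, Rich A B C M₀) {n : ℕ → ℕ} {M : ℕ → Set ℕ} (hM : Antitone M)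
    (hnM₀ : ∀ k, n k ∈ M₀) (hnM : ∀ k, n (k + 1) ∈ M k) (hMn : ∀ k, ∀ m ∈ M k, n k < m)
    {c : ℕ → Set S} (hc : ∀ k, c k ∈ 𝒞) (b : ℕ → Bool) :
    ∃ k, HasOscillation A B (c k ∩ cond (b k) (A (n k)) (B (n k))) (M k) := by
  have hn : StrictMono n := strictMono_nat_of_lt_succ fun k => hMn k _ (hnM k)
  have : Finite ↥(𝒞 ×ˢ Set.univ : Set (Set S × Bool)) := (h𝒞.prod Set.finite_univ).to_subtype
  obtain ⟨⟨⟨C, β⟩, hC, _⟩, hfib⟩ := Finite.exists_infinite_fiber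
    fun k => (⟨(c k, b k), hc k, trivial⟩ : ↥(𝒞 ×ˢ Set.univ : Set (Set S × Bool)))
  set J := {k | c k = C ∧ b k = β}
  have hJ : J.Infinite := by
    convert Set.infinite_coe_iff.1 hfib using 1
    ext k
    simp [J, Subtype.ext_iff]
  obtain ⟨g, hgC, hgA, hgB⟩ := hrich C hC (n '' J) (Set.image_subset_iff.2 fun k _ => hnM₀ k)
    (hJ.image hn.injective.injOn)
  obtain ⟨_, ⟨⟨j, hjJ, rfl⟩, hgj⟩⟩ : {m ∈ n '' J | g ∈ cond β (A m) (B m)}.Nonempty := by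
    cases β
    exacts [hgB.nonempty, hgA.nonempty]
  refine ⟨j, ?_⟩
  rw [hjJ.1, hjJ.2]
  refine HasOscillation.of_diff_finite ⟨g, ⟨hgC, hgj⟩, hgA, hgB⟩
    (((Set.finite_le_nat j).image n).subset ?_)
  rintro _ ⟨⟨t, -, rfl⟩, ht⟩
  refine ⟨t, show t ≤ j from not_lt.1 fun hjt => ht ?_, rfl⟩
  obtain ⟨t, rfl⟩ := Nat.exists_eq_add_of_lt hjt
  exact hM (by omega) (hnM (j + t))

lemma exists_rich_inter {𝒞 : Set (Set S)} (h𝒞 : 𝒞.Finite) (hM : M.Infinite)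
    (hrich : ∀ C ∈ 𝒞, Rich A B C M) :
    ∃ n ∈ M, ∃ M' ⊆ M, M'.Infinite ∧ (∀ m ∈ M', n < m) ∧
      ∀ C ∈ 𝒞, ∀ b, Rich A B (C ∩ cond b (A n) (B n)) M' := by
  by_contra! hfail
  have hnext : ∀ M₁ ⊆ M, M₁.Infinite → ∃ n ∈ M₁, ∃ M₂ ⊆ M₁, M₂.Infinite ∧ (∀ m ∈ M₂, n < m) ∧
      ∃ C ∈ 𝒞, ∃ b, ¬HasOscillation A B (C ∩ cond b (A n) (B n)) M₂ := by
    intro M₁ hM₁M hM₁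
    obtain ⟨n, hn⟩ := hM₁.nonempty
    have hgt : {m ∈ M₁ | n < m}.Infinite :=
      (hM₁.sdiff (Set.finite_Iic n)).mono fun m hm => ⟨hm.1, not_le.1 hm.2⟩
    obtain ⟨C, hC, b, hCb⟩ := hfail n (hM₁M hn) _ ((Set.sep_subset _ _).trans hM₁M) hgt
      fun m hm => hm.2
    simp only [Rich, not_forall] at hCb
    obtain ⟨M₂, hM₂, hM₂inf, hosc⟩ := hCb
    exact ⟨n, hn, M₂, hM₂.trans (Set.sep_subset _ _), hM₂inf, fun m hm => (hM₂ hm).2, C, hC, b,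
      hosc⟩
  -- Iterating the failure produces the sequence ruled out by `Rich.exists_hasOscillation_inter`.
  obtain ⟨f, -, hf⟩ := exists_seq_of_forall_exists (a := (0, M))
    (P := fun p : ℕ × Set ℕ => p.2 ⊆ M ∧ p.2.Infinite)
    (R := fun _ p q => q.1 ∈ p.2 ∧ q.2 ⊆ p.2 ∧ (∀ m ∈ q.2, q.1 < m) ∧
      ∃ C ∈ 𝒞, ∃ b, ¬HasOscillation A B (C ∩ cond b (A q.1) (B q.1)) q.2) ⟨subset_rfl, hM⟩
    (fun _ p hp => by
      obtain ⟨n, hn, M₂, hM₂, hM₂inf, hM₂n, hbad⟩ := hnext p.2 hp.1 hp.2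
      exact ⟨(n, M₂), ⟨hM₂.trans hp.1, hM₂inf⟩, hn, hM₂, hM₂n, hbad⟩)
  choose c hc b hb using fun k => (hf k).2.2.2.2
  obtain ⟨k, hk⟩ := Rich.exists_hasOscillation_inter h𝒞 hrich (n := fun k => (f (k + 1)).1)
    (M := fun k => (f (k + 1)).2) (antitone_nat_of_succ_le fun k => (hf (k + 1)).2.2.1)
    (fun k => (hf k).1.1 (hf k).2.1) (fun k => (hf (k + 1)).2.1) (fun k => (hf k).2.2.2.1) hc b
  exact hb k hk

lemma Rich.exists_strictMono_independent (hM : M.Infinite) (hR : Rich A B C M) :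
    ∃ N : ℕ → ℕ, StrictMono N ∧
      ∀ k (ε : Fin k → Bool), ∃ g ∈ C, ∀ i, g ∈ cond (ε i) (A (N i)) (B (N i)) := by
  -- A state `(𝒞, n, M')` holds the cells cut out by the indices chosen so far (all rich on `M'`),
  -- the last chosen index `n`, and the set `M'` of admissible later indices.
  obtain ⟨f, hf0, hf⟩ := exists_seq_of_forall_exists (a := ({C}, 0, M))
    (P := fun p : Set (Set S) × ℕ × Set ℕ =>
      p.1.Finite ∧ p.2.2.Infinite ∧ ∀ D ∈ p.1, Rich A B D p.2.2)
    (R := fun _ p q => q.1 = Set.image2 (fun D b => D ∩ cond b (A q.2.1) (B q.2.1)) p.1 Set.univ ∧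
      q.2.1 ∈ p.2.2 ∧ ∀ m ∈ q.2.2, q.2.1 < m)
    ⟨Set.finite_singleton C, hM, by simpa using hR⟩
    (fun _ p ⟨h𝒞, hp, hrich⟩ => by
      obtain ⟨n, hn, M', -, hM', hM'n, hrich'⟩ := exists_rich_inter h𝒞 hp hrich
      exact ⟨(_, n, M'), ⟨h𝒞.image2 _ Set.finite_univ, hM',
        Set.forall_mem_image2.2 fun D hD b _ => hrich' D hD b⟩, rfl, hn, hM'n⟩)
  set N : ℕ → ℕ := fun k => (f (k + 1)).2.1
  have hcell : ∀ k (ε : Fin k → Bool),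
      {g ∈ C | ∀ i, g ∈ cond (ε i) (A (N i)) (B (N i))} ∈ (f k).1 := by
    intro k
    induction k with
    | zero => intro ε; simp [hf0]
    | succ k ih =>
      intro ε
      rw [(hf k).2.1]
      refine ⟨_, ih (fun i => ε i.castSucc), ε (Fin.last k), trivial, ?_⟩
      ext g
      simp only [Set.mem_inter_iff, Set.mem_sep_iff, Fin.forall_fin_succ', and_assoc]
      rfl
  refine ⟨N, strictMono_nat_of_lt_succ fun k => (hf k).2.2.2 _ (hf (k + 1)).2.2.1,
    fun k ε => ?_⟩
  obtain ⟨-, hMk, hrich⟩ := (hf k).1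
  obtain ⟨g, hgC, hg⟩ := (hrich _ (hcell k ε)).nonempty hMk
  exact ⟨g, hgC, hg⟩

end Rosenthal

section BanachSpace

variable {X : Type*} [NormedAddCommGroup X] [NormedSpace ℝ X]

lemma weaklyConvergesTo_iff {x : ℕ → X} {l : X} :
    WeaklyConvergesTo x l ↔ ∀ f : X →L[ℝ] ℝ, Tendsto (fun n => f (x n)) atTop (𝓝 (f l)) :=
  WeakBilin.tendsto_iff_forall_eval_tendsto _ fun _ _ hab =>
    SeparatingDual.eq_iff_forall_dual_eq.2 fun f => LinearMap.congr_fun hab f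

lemma IsEquivL1Basis.exists_lower_bound {y : ℕ → X} (h : IsEquivL1Basis y) :
    ∃ c > 0, ∀ (s : Finset ℕ) (a : ℕ → ℝ), c * ∑ i ∈ s, |a i| ≤ ‖∑ i ∈ s, a i • y i‖ := by
  obtain ⟨c, _, hc, _, hb⟩ := h
  refine ⟨c, hc, fun s a => ?_⟩
  obtain ⟨n, hn⟩ := Finset.exists_nat_subset_range s
  have h := (hb n fun i => if (i : ℕ) ∈ s then a i else 0).1
  simp only [apply_ite, ite_smul, zero_smul, abs_zero] at h
  rwa [Fin.sum_univ_eq_sum_range (fun i => if i ∈ s then |a i| else 0),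
    Fin.sum_univ_eq_sum_range (fun i => if i ∈ s then a i • y i else 0), Finset.sum_ite_mem,
    Finset.sum_ite_mem, Finset.inter_eq_right.2 hn] at h

lemma IsEquivL1Basis.linearIndependent {y : ℕ → X} (h : IsEquivL1Basis y) :
    LinearIndependent ℝ y := by
  obtain ⟨c, hc, hb⟩ := h.exists_lower_bound
  refine linearIndependent_iff'.2 fun s a ha i hi => abs_eq_zero.1 ?_
  have hle : c * ∑ j ∈ s, |a j| ≤ 0 := by simpa [ha] using hb s a
  exact (Finset.sum_eq_zero_iff_of_nonneg fun j _ => abs_nonneg (a j)).1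
    (le_antisymm (nonpos_of_mul_nonpos_right hle hc) (Finset.sum_nonneg fun j _ => abs_nonneg _))
    i hi

lemma IsEquivL1Basis.exists_dual_apply_eq {y : ℕ → X} (h : IsEquivL1Basis y) {b : ℕ → ℝ}
    (hb : ∀ n, |b n| ≤ 1) : ∃ g : X →L[ℝ] ℝ, ∀ n, g (y n) = b n := by
  obtain ⟨c, hc, hlow⟩ := h.exists_lower_bound
  have hli := h.linearIndependent
  let g₀ : Submodule.span ℝ (Set.range y) →ₗ[ℝ] ℝ := Finsupp.linearCombination ℝ b ∘ₗ hli.repr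
  have hg₀ : ∀ v, ‖g₀ v‖ ≤ c⁻¹ * ‖v‖ := by
    intro v
    set a := hli.repr v
    have hv : (v : X) = ∑ n ∈ a.support, a n • y n := by
      rw [← hli.linearCombination_repr v, Finsupp.linearCombination_apply, Finsupp.sum]
    calc ‖g₀ v‖ = ‖∑ n ∈ a.support, a n * b n‖ := by
          simp [g₀, a, Finsupp.linearCombination_apply, Finsupp.sum]
      _ ≤ ∑ n ∈ a.support, |a n| := norm_sum_le_of_le _ fun n _ => by
          simpa [abs_mul] using mul_le_of_le_one_right (abs_nonneg (a n)) (hb n)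
      _ ≤ c⁻¹ * ‖v‖ := by
          rw [le_inv_mul_iff₀ hc, Submodule.coe_norm, hv]
          exact hlow _ _
  obtain ⟨g, hg, -⟩ := exists_extension_norm_eq _ (g₀.mkContinuous c⁻¹ hg₀)
  refine ⟨g, fun n => ?_⟩
  have hmem : y n ∈ Submodule.span ℝ (Set.range y) := Submodule.subset_span ⟨n, rfl⟩
  rw [show y n = ((⟨y n, hmem⟩ : Submodule.span ℝ (Set.range y)) : X) from rfl, hg]
  simp [g₀, hli.repr_eq_single n ⟨y n, hmem⟩ rfl]

lemma IsEquivL1Basis.not_isWeaklyCauchy {y : ℕ → X} (h : IsEquivL1Basis y) :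
    ¬IsWeaklyCauchy y := by
  intro hy
  obtain ⟨g, hg⟩ := h.exists_dual_apply_eq (b := fun n => (-1) ^ n) fun n => by simp
  obtain ⟨L, hL⟩ := hy g
  simp only [hg] at hL
  have h2 : Tendsto (fun k : ℕ => 2 * k) atTop atTop :=
    tendsto_id.const_mul_atTop' (by norm_num)
  have heven := hL.comp h2
  have hodd := hL.comp ((tendsto_add_atTop_nat 1).comp h2)
  simp only [Function.comp_def, pow_mul, pow_succ, pow_zero, mul_neg, mul_one, neg_neg, one_pow,
    tendsto_const_nhds_iff] at heven hodd
  linarith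

lemma cauchySeq_of_isWeaklyCauchy
    (hS : ∀ (x : ℕ → X) (l : X), WeaklyConvergesTo x l → Tendsto x atTop (𝓝 l)) {y : ℕ → X}
    (hy : IsWeaklyCauchy y) : CauchySeq y := by
  rw [cauchySeq_iff_tendsto_dist_atTop_0, tendsto_iff_seq_tendsto]
  intro p hp
  rw [← prod_atTop_atTop_eq, tendsto_prod_iff'] at hp
  have hw : WeaklyConvergesTo (fun k => y (p k).1 - y (p k).2) 0 := by
    refine weaklyConvergesTo_iff.2 fun f => ?_
    obtain ⟨L, hL⟩ := hy f
    simpa using (hL.comp hp.1).sub (hL.comp hp.2)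
  simpa [Function.comp_def, dist_eq_norm] using (hS _ _ hw).norm

lemma isEquivL1Basis_of_independent {x : ℕ → X} {K r s : ℝ} (hK : ∀ n, ‖x n‖ ≤ K)
    (hrs : r < s) (hind : ∀ k (ε : Fin k → Bool), ∃ g ∈ Metric.closedBall (0 : X →L[ℝ] ℝ) 1,
      ∀ i, g ∈ cond (ε i) {g | g (x i) < r} {g | s < g (x i)}) :
    IsEquivL1Basis x := by
  refine ⟨(s - r) / 2, max K 1, by linarith, by positivity, fun n a => ⟨?_, ?_⟩⟩
  · obtain ⟨g₁, hg₁, h₁⟩ := hind n fun i => decide (a i < 0)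
    obtain ⟨g₂, hg₂, h₂⟩ := hind n fun i => decide (0 ≤ a i)
    -- `g₁` and `g₂` realise opposite sign patterns of `a`.
    have hterm : ∀ i, (s - r) * |a i| ≤ a i * (g₁ - g₂) (x i) := by
      intro i
      have h₁ := h₁ i
      have h₂ := h₂ i
      rw [sub_apply]
      rcases le_or_gt 0 (a i) with hai | hai
      · simp only [hai, not_lt.2 hai, decide_true, decide_false, cond_true, cond_false,
          Set.mem_ofPred_eq] at h₁ h₂
        rw [abs_of_nonneg hai]
        nlinarith
      · simp only [hai, not_le.2 hai, decide_true, decide_false, cond_true, cond_false,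
          Set.mem_ofPred_eq] at h₁ h₂
        rw [abs_of_neg hai]
        nlinarith
    have hnorm : ‖g₁ - g₂‖ ≤ 2 := by
      rw [mem_closedBall_zero_iff] at hg₁ hg₂
      linarith [norm_sub_le g₁ g₂]
    have := calc
      (s - r) * ∑ i, |a i| ≤ ∑ i, a i * (g₁ - g₂) (x i) := by
          rw [Finset.mul_sum]
          exact Finset.sum_le_sum fun i _ => hterm i
      _ = (g₁ - g₂) (∑ i, a i • x i) := by simp [map_sum]
      _ ≤ ‖g₁ - g₂‖ * ‖∑ i, a i • x i‖ := (le_abs_self _).trans ((g₁ - g₂).le_opNorm _)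
      _ ≤ 2 * ‖∑ i, a i • x i‖ := by gcongr
    linarith
  · calc ‖∑ i, a i • x i‖ ≤ ∑ i, ‖a i • x i‖ := norm_sum_le _ _
      _ ≤ ∑ i, max K 1 * |a i| := Finset.sum_le_sum fun i _ => by
          rw [norm_smul, Real.norm_eq_abs, mul_comm]
          gcongr
          exact (hK i).trans (le_max_left _ _)
      _ = max K 1 * ∑ i, |a i| := (Finset.mul_sum _ _ _).symm

lemma isWeaklyCauchy_of_forall_norm_le_one {y : ℕ → X}
    (h : ∀ g : X →L[ℝ] ℝ, ‖g‖ ≤ 1 → ∃ L, Tendsto (fun n => g (y n)) atTop (𝓝 L)) :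
    IsWeaklyCauchy y := by
  intro f
  have hpos : 0 < ‖f‖ + 1 := by positivity
  obtain ⟨L, hL⟩ := h ((‖f‖ + 1)⁻¹ • f) (by
    rw [norm_smul, norm_inv, Real.norm_of_nonneg hpos.le, inv_mul_le_iff₀ hpos]
    linarith)
  refine ⟨(‖f‖ + 1) * L, (hL.const_mul (‖f‖ + 1)).congr fun n => ?_⟩
  simp [hpos.ne']

def DualOscillates (x : ℕ → X) (r s : ℝ) (M : Set ℕ) : Prop :=
  Rosenthal.HasOscillation (fun n => {g : X →L[ℝ] ℝ | g (x n) < r}) (fun n => {g | s < g (x n)})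
    (Metric.closedBall 0 1) M

lemma tendsto_of_forall_not_dualOscillates {x : ℕ → X} {K : ℝ} (hK : ∀ n, ‖x n‖ ≤ K)
    {φ : ℕ → ℕ} (hφ : StrictMono φ)
    (hosc : ∀ r s : ℚ, (r : ℝ) < s → ¬DualOscillates x r s (Set.range φ))
    {g : X →L[ℝ] ℝ} (hg : ‖g‖ ≤ 1) : ∃ L, Tendsto (fun k => g (x (φ k))) atTop (𝓝 L) := by
  have hbound : ∀ k, |g (x (φ k))| ≤ K := fun k =>
    (g.le_opNorm _).trans (by nlinarith [hK (φ k), norm_nonneg (x (φ k)), norm_nonneg g])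
  have hinf : ∀ p : ℝ → Prop, (∃ᶠ k in atTop, p (g (x (φ k)))) →
      {n ∈ Set.range φ | g ∈ {g : X →L[ℝ] ℝ | p (g (x n))}}.Infinite := fun p hp =>
    ((Nat.frequently_atTop_iff_infinite.1 hp).image hφ.injective.injOn).mono
      (by rintro _ ⟨k, hk, rfl⟩; exact ⟨⟨k, rfl⟩, hk⟩)
  refine tendsto_of_no_upcrossings Rat.denseRange_cast ?_
    (isBoundedUnder_of ⟨K, fun k => (abs_le.1 (hbound k)).2⟩)
    (isBoundedUnder_of ⟨-K, fun k => (abs_le.1 (hbound k)).1⟩)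
  rintro _ ⟨r, rfl⟩ _ ⟨s, rfl⟩ hrs ⟨hr, hs⟩
  exact hosc r s hrs ⟨g, mem_closedBall_zero_iff.2 hg, hinf (· < r) hr, hinf (s < ·) hs⟩

lemma exists_infinite_not_dualOscillates {x : ℕ → X} {K : ℝ} (hK : ∀ n, ‖x n‖ ≤ K)
    (hx : ∀ φ, StrictMono φ → ¬IsEquivL1Basis (x ∘ φ)) {r s : ℝ} (hrs : r < s) {M : Set ℕ}
    (hM : M.Infinite) : ∃ M' ⊆ M, M'.Infinite ∧ ¬DualOscillates x r s M' := by
  by_contra! hrich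
  obtain ⟨N, hN, hind⟩ := Rosenthal.Rich.exists_strictMono_independent hM hrich
  exact hx N hN (isEquivL1Basis_of_independent (fun n => hK (N n)) hrs hind)

theorem exists_strictMono_isEquivL1Basis_or_isWeaklyCauchy {x : ℕ → X}
    (hx : IsBounded (Set.range x)) :
    ∃ φ : ℕ → ℕ, StrictMono φ ∧ (IsEquivL1Basis (x ∘ φ) ∨ IsWeaklyCauchy (x ∘ φ)) := by
  by_cases hl1 : ∃ φ, StrictMono φ ∧ IsEquivL1Basis (x ∘ φ)
  · obtain ⟨φ, hφ, hl1⟩ := hl1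
    exact ⟨φ, hφ, Or.inl hl1⟩
  push Not at hl1
  obtain ⟨K, hK⟩ := isBounded_iff_forall_norm_le.1 hx
  replace hK : ∀ n, ‖x n‖ ≤ K := fun n => hK _ ⟨n, rfl⟩
  obtain ⟨D, hD, hDosc⟩ := exists_infinite_forall_of_forall_exists_infinite_subset
    (P := fun (p : ℚ × ℚ) M => (p.1 : ℝ) < p.2 → ¬DualOscillates x p.1 p.2 M)
    (fun p M hM => by
      by_cases hrs : (p.1 : ℝ) < p.2
      · obtain ⟨M', hM'M, hM', hosc⟩ := exists_infinite_not_dualOscillates hK hl1 hrs hM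
        exact ⟨M', hM'M, hM', fun _ => hosc⟩
      · exact ⟨M, subset_rfl, hM, fun h => absurd h hrs⟩)
    (fun p M M' hPM hfin hrs hosc => hPM hrs (hosc.of_diff_finite hfin))
  have hφ := Nat.nth_strictMono hD
  refine ⟨Nat.nth (· ∈ D), hφ, Or.inr (isWeaklyCauchy_of_forall_norm_le_one fun g hg =>
    tendsto_of_forall_not_dualOscillates hK hφ (fun r s hrs => ?_) hg)⟩
  rw [Nat.range_nth_of_infinite hD]
  exact hDosc (r, s) hrs

lemma WeaklyConvergesTo.isBounded_range {x : ℕ → X} {l : X} (hx : WeaklyConvergesTo x l) :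
    IsBounded (Set.range x) := by
  obtain ⟨C, hC⟩ := banach_steinhaus (g := fun n => NormedSpace.inclusionInDoubleDual ℝ X (x n))
    fun f => by
      obtain ⟨C, hC⟩ := (weaklyConvergesTo_iff.1 hx f).norm.bddAbove_range
      exact ⟨C, fun n => hC ⟨n, rfl⟩⟩
  refine isBounded_iff_forall_norm_le.2 ⟨C, ?_⟩
  rintro _ ⟨n, rfl⟩
  exact (NormedSpace.inclusionInDoubleDualLi ℝ (E := X)).norm_map (x n) ▸ hC n

lemma WeaklyConvergesTo.weaklyPrecompact_range {x : ℕ → X} {l : X}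
    (hx : WeaklyConvergesTo x l) : WeaklyPrecompact (Set.range x) := by
  refine ⟨hx.isBounded_range, fun y hy hl1 => hl1.not_isWeaklyCauchy fun f => ⟨f l, ?_⟩⟩
  choose k hk using hy
  have hk_inj : Function.Injective k := fun a b hab =>
    hl1.linearIndependent.injective (by rw [← hk a, ← hk b, hab])
  simpa only [Function.comp_def, hk] using
    (weaklyConvergesTo_iff.1 hx f).comp hk_inj.nat_tendsto_atTop

lemma WeaklyConvergesTo.tendsto_of_isCompact_closure {x : ℕ → X} {l : X}
    (hx : WeaklyConvergesTo x l) (hc : IsCompact (closure (Set.range x))) :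
    Tendsto x atTop (𝓝 l) := by
  refine tendsto_of_subseq_tendsto fun ns hns => ?_
  obtain ⟨a, -, ψ, hψ, ha⟩ := hc.tendsto_subseq fun n => subset_closure ⟨ns n, rfl⟩
  have hal : a = l := SeparatingDual.eq_iff_forall_dual_eq.2 fun f =>
    tendsto_nhds_unique ((f.continuous.tendsto a).comp ha)
      ((weaklyConvergesTo_iff.1 hx f).comp (hns.comp hψ.tendsto_atTop))
  exact ⟨ψ, hal ▸ ha⟩

end BanachSpace

/-- For a real Banach space `X`, the following are equivalent:
(1) `X` has the Schur property;
(2) every bounded sequence in `X` has a subsequence which is either norm convergent or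
    equivalent to the canonical basis of `ℓ₁`;
(3) every weakly precompact subset of `X` is relatively compact in the norm topology. -/
theorem stmt1 (X : Type*) [NormedAddCommGroup X] [NormedSpace ℝ X] [CompleteSpace X] :
    List.TFAE
      [∀ (x : ℕ → X) (l : X), WeaklyConvergesTo x l → Tendsto x atTop (𝓝 l),
       ∀ x : ℕ → X, Bornology.IsBounded (Set.range x) →
         ∃ φ : ℕ → ℕ, StrictMono φ ∧
           ((∃ l : X, Tendsto (x ∘ φ) atTop (𝓝 l)) ∨ IsEquivL1Basis (x ∘ φ)),
       ∀ A : Set X, WeaklyPrecompact A → IsCompact (closure A)] := by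
  tfae_have 1 → 2 := fun hS x hx => by
    obtain ⟨φ, hφ, hl1 | hwc⟩ := exists_strictMono_isEquivL1Basis_or_isWeaklyCauchy hx
    · exact ⟨φ, hφ, Or.inr hl1⟩
    · exact ⟨φ, hφ, Or.inl (cauchySeq_tendsto_of_complete (cauchySeq_of_isWeaklyCauchy hS hwc))⟩
  tfae_have 2 → 3 := fun h2 A ⟨hA, hAl1⟩ => isCompact_closure_of_forall_exists_tendsto
    fun a ha => by
      obtain ⟨φ, hφ, ⟨l, hl⟩ | hl1⟩ := h2 a (hA.subset (Set.range_subset_iff.2 ha))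
      · exact ⟨l, φ, hφ, hl⟩
      · exact absurd hl1 (hAl1 _ fun n => ha (φ n))
  tfae_have 3 → 1 := fun h3 x l hx =>
    hx.tendsto_of_isCompact_closure (h3 _ hx.weaklyPrecompact_range)
  tfae_finish
end

section
/- Let X be a real Banach space, T : X → ℓ1 a bounded linear operator, and A ⊆ X a weakly precompact set. Then T(A) is relatively compact in the norm topology of ℓ1. -/
open Filter Topology Bornology

/-!
Take a sequence `(x n)` in `A` and pass to a subsequence along which `T (x n)` converges
coordinatewise, to some `G ∈ ℓ¹`. Either `T (x n) → G` in norm, or `‖T (x n) - G‖ ≥ δ` along a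
further subsequence. In the second case `T (x n) - G → 0` coordinatewise, so a gliding hump
argument yields terms `T (x nₖ) - G` that carry almost all their mass on pairwise disjoint blocks
of coordinates, one block each, while `G` has mass `≤ δ / 8` on their union. This forces the lower
estimate `‖∑ aₖ • T (x nₖ)‖ ≥ δ / 8 * ∑ |aₖ|`, which pulls back through `T` and, `A` being bounded,
makes `(x nₖ)` equivalent to the canonical basis of `ℓ¹`, contradicting weak precompactness.
So every sequence in `T '' A` has a Cauchy subsequence: `T '' A` is totally bounded.
-/

open Finset Function

local notation "ℓ¹" => lp (fun _ : ℕ => ℝ) 1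

theorem totallyBounded_of_forall_exists_cauchySeq {X : Type*} [UniformSpace X] {s : Set X}
    (h : ∀ u : ℕ → X, (∀ n, u n ∈ s) → ∃ φ : ℕ → ℕ, StrictMono φ ∧ CauchySeq (u ∘ φ)) :
    TotallyBounded s := by
  intro V hV
  contrapose! h
  obtain ⟨u, hus, hu⟩ : ∃ u : ℕ → X, (∀ n, u n ∈ s) ∧
      ∀ n m, m < n → u m ∉ UniformSpace.ball (u n) V := by
    simp only [Set.not_subset, Set.mem_iUnion₂, not_exists, exists_prop] at h
    simpa only [forall_and, Set.forall_mem_image, not_and] using! Set.seq_of_forall_finite_exists h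
  refine ⟨u, hus, fun φ hφ huφ => ?_⟩
  obtain ⟨N, hN⟩ := huφ.mem_entourage hV
  exact hu (φ (N + 1)) (φ N) (hφ N.lt_add_one) (hN (N + 1) N N.le_succ le_rfl)

theorem two_mul_norm_le_norm_sum_add_sum_norm {E ι : Type*} [SeminormedAddCommGroup E]
    [DecidableEq ι] {s : Finset ι} (c : ι → E) {k : ι} (hk : k ∈ s) :
    2 * ‖c k‖ ≤ ‖∑ i ∈ s, c i‖ + ∑ i ∈ s, ‖c i‖ := by
  rw [← add_sum_erase s c hk, ← add_sum_erase s (‖c ·‖) hk]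
  have := norm_sub_le (c k + ∑ i ∈ s.erase k, c i) (∑ i ∈ s.erase k, c i)
  rw [add_sub_cancel_right] at this
  linarith [norm_sum_le (s.erase k) c]

theorem lp.exists_subseq_tendsto_apply {p : ENNReal} [Fact (1 ≤ p)]
    {y : ℕ → lp (fun _ : ℕ => ℝ) p} {M : ℝ} (hy : ∀ n, ‖y n‖ ≤ M) :
    ∃ G : lp (fun _ : ℕ => ℝ) p, ∃ φ : ℕ → ℕ, StrictMono φ ∧
      ∀ j, Tendsto (fun n => y (φ n) j) atTop (𝓝 (G j)) := by
  have hp : p ≠ 0 := (zero_lt_one.trans_le Fact.out).ne'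
  have hK : IsCompact (Set.univ.pi fun _ : ℕ => Set.Icc (-M) M) :=
    isCompact_univ_pi fun _ => isCompact_Icc
  have hyK : ∀ n, ⇑(y n) ∈ Set.univ.pi fun _ : ℕ => Set.Icc (-M) M := fun n j _ =>
    abs_le.1 ((lp.norm_apply_le_norm hp (y n) j).trans (hy n))
  obtain ⟨g, -, φ, hφ, hg⟩ := hK.isSeqCompact hyK
  have hgp : Memℓp g p := lp.memℓp_of_tendsto
    (isBounded_iff_forall_norm_le.2 ⟨M, Set.forall_mem_range.2 fun n => hy (φ n)⟩) hg
  exact ⟨⟨g, hgp⟩, φ, hφ, tendsto_pi_nhds.1 hg⟩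

theorem lp.sum_abs_sub_le {p : ENNReal} (f g : lp (fun _ : ℕ => ℝ) p) (s : Finset ℕ) :
    ∑ j ∈ s, |(f - g) j| ≤ ∑ j ∈ s, |f j| + ∑ j ∈ s, |g j| := by
  rw [← sum_add_distrib]
  exact sum_le_sum fun j _ => abs_sub (f j) (g j)

theorem lp.sum_abs_le_sum_abs_sub {p : ENNReal} (f g : lp (fun _ : ℕ => ℝ) p) (s : Finset ℕ) :
    ∑ j ∈ s, |f j| ≤ ∑ j ∈ s, |(f - g) j| + ∑ j ∈ s, |g j| := by
  rw [← sum_add_distrib]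
  exact sum_le_sum fun j _ => by simpa using abs_add_le (f j - g j) (g j)

theorem Monotone.pairwise_disjoint_on_finsetIco_succ {N : ℕ → ℕ} (hN : Monotone N) :
    Pairwise (Disjoint on fun k => Ico (N k) (N (k + 1))) := fun k l hkl => by
  simpa only [← disjoint_coe, coe_Ico, Order.succ_eq_add_one] using
    hN.pairwise_disjoint_on_Ico_succ hkl

theorem lp.hasSum_abs_one (f : ℓ¹) : HasSum (fun j => |f j|) ‖f‖ := by
  simpa using lp.hasSum_norm (p := 1) (by norm_num) f

theorem lp.sum_abs_le_norm_one (f : ℓ¹) (s : Finset ℕ) : ∑ j ∈ s, |f j| ≤ ‖f‖ :=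
  sum_le_hasSum s (fun _ _ => abs_nonneg _) (lp.hasSum_abs_one f)

theorem lp.sum_sum_abs_le_norm_one {ι : Type*} [Fintype ι] (f : ℓ¹) {B : ι → Finset ℕ}
    (hB : Pairwise (Disjoint on B)) : ∑ k, ∑ j ∈ B k, |f j| ≤ ‖f‖ := by
  rw [← sum_biUnion (hB.set_pairwise _)]
  exact lp.sum_abs_le_norm_one f _

theorem lp.eventually_norm_sub_lt_sum_abs_one (f : ℓ¹) {η : ℝ} (hη : 0 < η) :
    ∀ᶠ N in atTop, ‖f‖ - η < ∑ j ∈ range N, |f j| :=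
  (lp.hasSum_abs_one f).tendsto_sum_nat.eventually (lt_mem_nhds (sub_lt_self _ hη))

theorem lp.sum_abs_le_of_norm_sub_lt_sum_abs_one {f : ℓ¹} {η : ℝ} {N₀ : ℕ}
    (hN₀ : ‖f‖ - η < ∑ j ∈ range N₀, |f j|) {s : Finset ℕ} (hs : ∀ j ∈ s, N₀ ≤ j) :
    ∑ j ∈ s, |f j| ≤ η := by
  have hdisj : Disjoint (range N₀) s :=
    disjoint_left.2 fun j hj hjs => (mem_range.1 hj).not_ge (hs j hjs)
  have := lp.sum_abs_le_norm_one f (range N₀ ∪ s)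
  rw [sum_union hdisj] at this
  linarith

theorem lp.sub_mul_sum_abs_le_norm_of_blocks {ι : Type*} [Fintype ι] (y : ι → ℓ¹)
    {B : ι → Finset ℕ} (hB : Pairwise (Disjoint on B)) {α β : ℝ}
    (hα : ∀ i, α ≤ ∑ j ∈ B i, |y i j|)
    (hβ : ∀ i, ∑ k, ∑ j ∈ B k, |y i j| ≤ ∑ j ∈ B i, |y i j| + β) (a : ι → ℝ) :
    (α - β) * ∑ i, |a i| ≤ ‖∑ i, a i • y i‖ := by
  classical
  set f := ∑ i, a i • y i
  set m : ι → ι → ℝ := fun i k => ∑ j ∈ B k, |y i j|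
  have hf : ∀ j, f j = ∑ i, a i * y i j := fun j => by
    simp only [f, lp.coeFn_sum, lp.coeFn_smul, Finset.sum_apply, Pi.smul_apply, smul_eq_mul]
  have hblock : ∀ k, 2 * (|a k| * m k k) - ∑ i, |a i| * m i k ≤ ∑ j ∈ B k, |f j| := by
    intro k
    have hpt : ∀ j, 2 * (|a k| * |y k j|) - ∑ i, |a i| * |y i j| ≤ |f j| := by
      intro j
      have := two_mul_norm_le_norm_sum_add_sum_norm (fun i => a i * y i j) (mem_univ k)
      simp only [Real.norm_eq_abs, abs_mul] at this
      rw [hf]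
      linarith
    calc 2 * (|a k| * m k k) - ∑ i, |a i| * m i k
        = ∑ j ∈ B k, (2 * (|a k| * |y k j|) - ∑ i, |a i| * |y i j|) := by
          simp only [m, sum_sub_distrib, mul_sum]
          rw [sum_comm]
      _ ≤ ∑ j ∈ B k, |f j| := sum_le_sum fun j _ => hpt j
  calc (α - β) * ∑ i, |a i|
      ≤ ∑ i, (2 * (|a i| * m i i) - |a i| * ∑ k, m i k) := by
        rw [mul_sum]
        refine sum_le_sum fun i _ => ?_
        have h1 := mul_le_mul_of_nonneg_left (hα i) (abs_nonneg (a i))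
        have h2 := mul_le_mul_of_nonneg_left (hβ i) (abs_nonneg (a i))
        linarith
    _ = ∑ k, (2 * (|a k| * m k k) - ∑ i, |a i| * m i k) := by
        simp only [sum_sub_distrib, mul_sum]
        rw [sum_comm (f := fun i k => |a i| * m i k)]
    _ ≤ ∑ k, ∑ j ∈ B k, |f j| := sum_le_sum fun k _ => hblock k
    _ ≤ ‖f‖ := lp.sum_sum_abs_le_norm_one f hB

theorem lp.exists_gliding_hump {w : ℕ → ℓ¹} (hw : ∀ j, Tendsto (fun n => w n j) atTop (𝓝 0))
    {η : ℝ} (hη : 0 < η) (N₀ : ℕ) :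
    ∃ θ N : ℕ → ℕ, N 0 = N₀ ∧ Monotone N ∧ ∀ k,
      ∑ j ∈ range (N k), |w (θ k) j| < η ∧
      ‖w (θ k)‖ - η < ∑ j ∈ range (N (k + 1)), |w (θ k) j| := by
  have hstep : ∀ M, ∃ m M', M ≤ M' ∧ ∑ j ∈ range M, |w m j| < η ∧
      ‖w m‖ - η < ∑ j ∈ range M', |w m j| := by
    intro M
    have hhead : Tendsto (fun m => ∑ j ∈ range M, |w m j|) atTop (𝓝 0) := by
      simpa using tendsto_finsetSum (range M) fun j _ => (hw j).abs
    obtain ⟨m, hm⟩ := (hhead.eventually (gt_mem_nhds hη)).exists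
    obtain ⟨M', hMM', hM'⟩ :=
      ((eventually_ge_atTop M).and (lp.eventually_norm_sub_lt_sum_abs_one (w m) hη)).exists
    exact ⟨m, M', hMM', hm, hM'⟩
  choose m next hle hhead htail using hstep
  refine ⟨fun k => m (next^[k] N₀), fun k => next^[k] N₀, rfl,
    monotone_nat_of_le_succ fun k => ?_, fun k => ⟨hhead _, ?_⟩⟩
  · simpa only [iterate_succ_apply'] using hle (next^[k] N₀)
  · simpa only [iterate_succ_apply'] using htail (next^[k] N₀)

def HasL1LowerEstimate {E : Type*} [NormedAddCommGroup E] [NormedSpace ℝ E] (c : ℝ)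
    (y : ℕ → E) : Prop :=
  ∀ (n : ℕ) (a : Fin n → ℝ), c * ∑ i, |a i| ≤ ‖∑ i, a i • y (i : ℕ)‖

theorem lp.exists_hasL1LowerEstimate_of_tendsto_apply {y : ℕ → ℓ¹} {G : ℓ¹}
    (hy : ∀ j, Tendsto (fun n => y n j) atTop (𝓝 (G j))) {δ : ℝ} (hδ : 0 < δ)
    (hfar : ∀ n, δ ≤ ‖y n - G‖) :
    ∃ θ : ℕ → ℕ, HasL1LowerEstimate (δ / 8) (fun k => y (θ k)) := by
  -- Each `y (θ k)` has mass `≥ δ - 3 * η` on its own block and leaks `≤ 4 * η` into the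
  -- others (`2 * η` from `y (θ k) - G`, `η` twice from `G`), which leaves `η`.
  set η := δ / 8
  have hη : 0 < η := by positivity
  obtain ⟨N₀, hN₀⟩ := (lp.eventually_norm_sub_lt_sum_abs_one G hη).exists
  have hw : ∀ j, Tendsto (fun n => (y n - G) j) atTop (𝓝 0) := fun j => by
    simpa using (hy j).sub_const (G j)
  obtain ⟨θ, N, hN0, hN, hhump⟩ := lp.exists_gliding_hump hw hη N₀
  set B : ℕ → Finset ℕ := fun k => Ico (N k) (N (k + 1))
  have hGB : ∀ s : Finset ℕ, (∀ j ∈ s, ∃ k, j ∈ B k) → ∑ j ∈ s, |G j| ≤ η := by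
    refine fun s hs => lp.sum_abs_le_of_norm_sub_lt_sum_abs_one hN₀ fun j hj => ?_
    obtain ⟨k, hk⟩ := hs j hj
    exact hN0 ▸ (hN k.zero_le).trans (mem_Ico.1 hk).1
  have hown : ∀ k, ‖y (θ k) - G‖ - 2 * η ≤ ∑ j ∈ B k, |(y (θ k) - G) j| := fun k => by
    have := sum_range_add_sum_Ico (fun j => |(y (θ k) - G) j|) (hN k.le_succ)
    linarith [(hhump k).1, (hhump k).2]
  refine ⟨θ, fun n a => ?_⟩
  have hBn : Pairwise (Disjoint on fun i : Fin n => B i) :=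
    hN.pairwise_disjoint_on_finsetIco_succ.comp_of_injective Fin.val_injective
  have hα : ∀ i : Fin n, δ - 3 * η ≤ ∑ j ∈ B i, |y (θ i) j| := fun i => by
    linarith [hown i, hfar (θ i), lp.sum_abs_sub_le (y (θ i)) G (B i),
      hGB (B i) fun j hj => ⟨i, hj⟩]
  have hβ : ∀ l : Fin n, ∑ k : Fin n, ∑ j ∈ B k, |y (θ l) j|
      ≤ ∑ j ∈ B l, |y (θ l) j| + 4 * η := fun l => by
    rw [← sum_biUnion (hBn.set_pairwise _)]
    set U := univ.biUnion fun k : Fin n => B k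
    have hU : ∀ j ∈ U, ∃ k, j ∈ B k := fun j hj => by
      obtain ⟨k, -, hk⟩ := mem_biUnion.1 hj
      exact ⟨k, hk⟩
    linarith [hown l, lp.sum_abs_le_sum_abs_sub (y (θ l)) G U,
      lp.sum_abs_le_norm_one (y (θ l) - G) U, lp.sum_abs_sub_le (y (θ l)) G (B l), hGB U hU,
      hGB (B l) fun j hj => ⟨l, hj⟩]
  have := lp.sub_mul_sum_abs_le_norm_of_blocks (fun i : Fin n => y (θ i)) hBn hα hβ a
  convert this using 2
  ring

theorem isEquivL1Basis_of_hasL1LowerEstimate_map {X Y : Type*} [NormedAddCommGroup X]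
    [NormedSpace ℝ X] [NormedAddCommGroup Y] [NormedSpace ℝ Y] (T : X →L[ℝ] Y) {x : ℕ → X}
    {M c : ℝ} (hx : ∀ n, ‖x n‖ ≤ M) (hc : 0 < c) (hT : HasL1LowerEstimate c (fun n => T (x n))) :
    IsEquivL1Basis x := by
  have hM : 0 ≤ M := (norm_nonneg _).trans (hx 0)
  refine ⟨c / (‖T‖ + 1), M + 1, by positivity, by positivity, fun n a => ⟨?_, ?_⟩⟩
  · rw [div_mul_eq_mul_div, div_le_iff₀ (by positivity)]
    calc c * ∑ i, |a i| ≤ ‖∑ i, a i • T (x i)‖ := hT n a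
      _ = ‖T (∑ i, a i • x i)‖ := by simp only [map_sum, map_smul]
      _ ≤ ‖T‖ * ‖∑ i, a i • x i‖ := T.le_opNorm _
      _ ≤ ‖∑ i, a i • x i‖ * (‖T‖ + 1) := by nlinarith [norm_nonneg (∑ i, a i • x i)]
  · calc ‖∑ i, a i • x i‖ ≤ ∑ i, |a i| * ‖x i‖ := by
          simpa only [norm_smul, Real.norm_eq_abs] using norm_sum_le univ fun i => a i • x i
      _ ≤ ∑ i, |a i| * (M + 1) :=
          sum_le_sum fun i _ => mul_le_mul_of_nonneg_left (by linarith [hx i]) (abs_nonneg _)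
      _ = (M + 1) * ∑ i, |a i| := by rw [← sum_mul, mul_comm]

theorem WeaklyPrecompact.exists_cauchySeq_map_subseq {X : Type*} [NormedAddCommGroup X]
    [NormedSpace ℝ X] {A : Set X} (hA : WeaklyPrecompact A) (T : X →L[ℝ] ℓ¹) {x : ℕ → X}
    (hx : ∀ n, x n ∈ A) : ∃ φ : ℕ → ℕ, StrictMono φ ∧ CauchySeq (fun n => T (x (φ n))) := by
  obtain ⟨M, hM⟩ := hA.1.exists_norm_le
  have hTx : ∀ n, ‖T (x n)‖ ≤ ‖T‖ * M := fun n =>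
    T.le_of_opNorm_le_of_le le_rfl (hM _ (hx n))
  obtain ⟨G, φ, hφ, hG⟩ := lp.exists_subseq_tendsto_apply hTx
  by_cases hconv : Tendsto (fun n => T (x (φ n))) atTop (𝓝 G)
  · exact ⟨φ, hφ, hconv.cauchySeq⟩
  obtain ⟨δ, hδ, hfar⟩ : ∃ δ > 0, ∃ᶠ n in atTop, δ ≤ ‖T (x (φ n)) - G‖ := by
    simpa [Metric.tendsto_atTop, frequently_atTop, dist_eq_norm] using hconv
  obtain ⟨ψ, hψ, hψfar⟩ := extraction_of_frequently_atTop hfar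
  obtain ⟨θ, hθ⟩ := lp.exists_hasL1LowerEstimate_of_tendsto_apply
    (fun j => (hG j).comp hψ.tendsto_atTop) hδ hψfar
  exact absurd (isEquivL1Basis_of_hasL1LowerEstimate_map T (fun k => hM _ (hx _))
    (by positivity) hθ) (hA.2 _ fun k => hx _)

theorem stmt7_general (X : Type*) [NormedAddCommGroup X] [NormedSpace ℝ X]
    (T : X →L[ℝ] lp (fun _ : ℕ => ℝ) 1) (A : Set X) (hA : WeaklyPrecompact A) :
    IsCompact (closure (T '' A)) := by
  refine (totallyBounded_of_forall_exists_cauchySeq fun u hu => ?_).closure.isCompact_of_isClosed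
    isClosed_closure
  choose x hxA hxu using hu
  obtain ⟨φ, hφ, hcauchy⟩ := hA.exists_cauchySeq_map_subseq T hxA
  exact ⟨φ, hφ, by simpa only [Function.comp_def, hxu] using hcauchy⟩

/-- If `T : X → ℓ₁` is a bounded linear operator on a real Banach space `X` and
`A ⊆ X` is weakly precompact, then `T '' A` is relatively compact in the norm topology of `ℓ₁`. -/
theorem stmt7 (X : Type*) [NormedAddCommGroup X] [NormedSpace ℝ X] [CompleteSpace X]
    (T : X →L[ℝ] lp (fun _ : ℕ => ℝ) 1) (A : Set X) (hA : WeaklyPrecompact A) :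
    IsCompact (closure (T '' A)) :=
  stmt7_general X T A hA
end

section
/- Let X be a real Banach space and A ⊆ X a bounded set. Then A is weakly precompact if and only if every sequence in A has a weakly Cauchy subsequence. -/
/-!
An `ℓ₁`-basis has no weakly Cauchy subsequence: by Hahn–Banach, `∑ aᵢ xᵢ ↦ ∑ aᵢ εᵢ` extends to a
continuous functional for every bounded `ε`, e.g. one that is `1` on the even and `0` on the odd
terms of the subsequence.

Conversely, fix rationals `a < b` and apply Rosenthal's dichotomy to the sets `{f | f (xₙ) < a}`
and `{f | b < f (xₙ)}` of the dual unit ball. Along an independent subsequence some functional is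
below `a` on any prescribed finite set of terms and above `b` on another disjoint one, which gives
the lower `ℓ₁` estimate. So if `A` contains no `ℓ₁`-basis, some subsequence has no functional
crossing `(a, b)` infinitely often; a diagonal subsequence does this for all rational pairs and is
weakly Cauchy.

Rosenthal's dichotomy follows from the Nash-Williams theorem, proved by the Galvin–Prikry
accept/reject argument and fusion. Infinite subsets of `ℕ` are encoded as strictly increasing
sequences, finite ones as lists.
-/

open Filter Topology Bornology

lemma exists_seq_of_forall_exists_rel {α : Type*} {P : α → Prop} {R : α → α → Prop} (a₀ : α)
    (h₀ : P a₀) (h : ∀ a, P a → ∃ b, P b ∧ R a b) :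
    ∃ f : ℕ → α, f 0 = a₀ ∧ (∀ n, P (f n)) ∧ ∀ n, R (f n) (f (n + 1)) := by
  choose next hnextP hnextR using h
  let F : ℕ → {a // P a} := fun n => Nat.rec ⟨a₀, h₀⟩ (fun _ a => ⟨next a.1 a.2, hnextP _ _⟩) n
  exact ⟨fun n => (F n).1, rfl, fun n => (F n).2, fun n => hnextR _ _⟩

def IsSubseq (e d : ℕ → ℕ) : Prop := ∃ g : ℕ → ℕ, StrictMono g ∧ e = d ∘ g

lemma isSubseq_comp (d : ℕ → ℕ) {g : ℕ → ℕ} (hg : StrictMono g) : IsSubseq (d ∘ g) d :=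
  ⟨g, hg, rfl⟩

namespace IsSubseq

variable {c d e : ℕ → ℕ}

lemma refl (d : ℕ → ℕ) : IsSubseq d d := isSubseq_comp d strictMono_id

lemma trans (h₁ : IsSubseq e d) (h₂ : IsSubseq d c) : IsSubseq e c := by
  obtain ⟨g, hg, rfl⟩ := h₁
  obtain ⟨g', hg', rfl⟩ := h₂
  exact ⟨g' ∘ g, hg'.comp hg, rfl⟩

lemma strictMono (h : IsSubseq e d) (hd : StrictMono d) : StrictMono e := by
  obtain ⟨g, hg, rfl⟩ := h
  exact hd.comp hg

lemma mem_range (h : IsSubseq e d) (k : ℕ) : e k ∈ Set.range d := by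
  obtain ⟨g, -, rfl⟩ := h
  exact ⟨g k, rfl⟩

end IsSubseq

lemma isSubseq_of_forall_mem_range {d e : ℕ → ℕ} (hd : StrictMono d) (he : StrictMono e)
    (h : ∀ k, e k ∈ Set.range d) : IsSubseq e d := by
  choose g hg using h
  refine ⟨g, fun a b hab => hd.lt_iff_lt.mp ?_, funext fun k => (hg k).symm⟩
  rw [hg a, hg b]
  exact he hab

lemma isSubseq_of_le {D : ℕ → ℕ → ℕ} (hD : ∀ k, IsSubseq (D (k + 1)) (D k)) {k m : ℕ}
    (hkm : k ≤ m) : IsSubseq (D m) (D k) := by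
  induction m, hkm using Nat.le_induction with
  | base => exact .refl _
  | succ m _ ih => exact (hD m).trans ih

lemma isSubseq_comp_tail (d : ℕ → ℕ) {g : ℕ → ℕ} (hg : StrictMono g) (j : ℕ) :
    IsSubseq (d ∘ g ∘ (· + (j + 1))) (d ∘ (· + (g j + 1))) := by
  refine ⟨fun i => g (i + (j + 1)) - (g j + 1), fun a b hab => ?_, funext fun i => ?_⟩
  · have := hg (show a + (j + 1) < b + (j + 1) by omega)
    have := hg (show j < a + (j + 1) by omega)
    dsimp only
    omega
  · have := hg (show j < i + (j + 1) by omega)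
    simp only [Function.comp_apply]
    congr 1
    omega

lemma exists_strictMono_forall_of_diagonal {P : ℕ → (ℕ → ℕ) → Prop}
    (hcomp : ∀ k d (g : ℕ → ℕ), StrictMono g → P k d → P k (d ∘ g))
    (hshift : ∀ k d (c : ℕ), P k (d ∘ (· + c)) → P k d)
    (hex : ∀ k d, ∃ g : ℕ → ℕ, StrictMono g ∧ P k (d ∘ g)) :
    ∃ φ, StrictMono φ ∧ ∀ k, P k φ := by
  choose g hg hP using hex
  obtain ⟨D, hD0, hDsucc⟩ : ∃ D : ℕ → ℕ → ℕ, D 0 = id ∧ ∀ k, D (k + 1) = D k ∘ g k (D k) :=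
    ⟨fun k => Nat.rec id (fun k D => D ∘ g k D) k, rfl, fun k => rfl⟩
  have hDsub : ∀ k, IsSubseq (D (k + 1)) (D k) := fun k => hDsucc k ▸ isSubseq_comp _ (hg _ _)
  have hDmono : ∀ k, StrictMono (D k) := fun k =>
    (isSubseq_of_le hDsub (Nat.zero_le k)).strictMono (hD0 ▸ strictMono_id)
  have hφ : StrictMono fun n => D n n := strictMono_nat_of_lt_succ fun n => by
    rw [hDsucc]
    exact hDmono n (Nat.lt_succ_self n |>.trans_le ((hg n (D n)).id_le (n + 1)))
  refine ⟨_, hφ, fun k => hshift k _ (k + 1) ?_⟩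
  obtain ⟨u, hu, hDu⟩ : IsSubseq (fun t => D (t + (k + 1)) (t + (k + 1))) (D (k + 1)) :=
    isSubseq_of_forall_mem_range (hDmono _)
      (fun a b hab => hφ (show a + (k + 1) < b + (k + 1) by omega))
      fun t => (isSubseq_of_le hDsub (show k + 1 ≤ t + (k + 1) by omega)).mem_range _
  have hφk : (fun n => D n n) ∘ (· + (k + 1)) = D (k + 1) ∘ u := hDu
  exact hφk ▸ hcomp k _ u hu (hDsucc k ▸ hP k (D k))

lemma map_range_comp_sublist {α : Type*} (e : ℕ → α) {g : ℕ → ℕ} (hg : StrictMono g) (n : ℕ) :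
    ((List.range n).map (e ∘ g)).Sublist ((List.range (g n)).map e) := by
  induction n with
  | zero => simp
  | succ n ih =>
    rw [List.range_succ, List.map_append]
    refine (ih.append (List.Sublist.refl [e (g n)])).trans ?_
    rw [show [e (g n)] = [g n].map e from rfl, ← List.map_append, ← List.range_succ]
    exact (List.range_sublist.mpr (hg (Nat.lt_succ_self n))).map e

namespace NashWilliams

variable (Bad : List ℕ → Prop)

-- Only bad lists extending `s` count, not prefixes of `s`; this is all the argument needs.
def Hits (s : List ℕ) (N : ℕ → ℕ) : Prop := ∃ n, Bad (s ++ (List.range n).map N)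

def Accepts (s : List ℕ) (M : ℕ → ℕ) : Prop := ∀ N, IsSubseq N M → Hits Bad s N

def Rejects (s : List ℕ) (M : ℕ → ℕ) : Prop := ∀ N, IsSubseq N M → ¬ Accepts Bad s N

def RejectsExtensions (s : List ℕ) (M : ℕ → ℕ) : Prop :=
  ∀ j, Rejects Bad (s ++ [M j]) (M ∘ (· + (j + 1)))

def RejectsSublists (F : List ℕ) (M : ℕ → ℕ) : Prop :=
  ∀ t, t.Sublist F → Rejects Bad t M ∧ RejectsExtensions Bad t M

variable {Bad} {s : List ℕ} {M N : ℕ → ℕ}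

lemma Accepts.of_isSubseq (h : Accepts Bad s M) (hN : IsSubseq N M) : Accepts Bad s N :=
  fun _ hN' => h _ (hN'.trans hN)

lemma Rejects.of_isSubseq (h : Rejects Bad s M) (hN : IsSubseq N M) : Rejects Bad s N :=
  fun _ hN' => h _ (hN'.trans hN)

lemma RejectsExtensions.comp (h : RejectsExtensions Bad s M) {g : ℕ → ℕ} (hg : StrictMono g) :
    RejectsExtensions Bad s (M ∘ g) :=
  fun j => (h (g j)).of_isSubseq (isSubseq_comp_tail M hg j)

lemma exists_isSubseq_accepts_or_rejects (s : List ℕ) (M : ℕ → ℕ) :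
    ∃ N, IsSubseq N M ∧ (Accepts Bad s N ∨ Rejects Bad s N) := by
  by_cases h : ∃ N, IsSubseq N M ∧ Accepts Bad s N
  · obtain ⟨N, hN, hacc⟩ := h
    exact ⟨N, hN, Or.inl hacc⟩
  · exact ⟨M, .refl M, Or.inr fun N hN hacc => h ⟨N, hN, hacc⟩⟩

lemma accepts_of_forall_accepts_append {L : ℕ → ℕ}
    (h : ∀ t, Accepts Bad (s ++ [L t]) (L ∘ (· + (t + 1)))) : Accepts Bad s L := by
  rintro _ ⟨g, hg, rfl⟩
  obtain ⟨n, hn⟩ := h (g 0) _ (isSubseq_comp_tail L hg 0)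
  refine ⟨n + 1, ?_⟩
  rw [List.range_succ_eq_map, List.map_cons, List.map_map, ← List.singleton_append,
    ← List.append_assoc]
  exact hn

def IsFusionSeq (T : ℕ → ℕ → ℕ) : Prop := ∀ k, IsSubseq (T (k + 1)) (T k ∘ (· + 1))

namespace IsFusionSeq

variable {T : ℕ → ℕ → ℕ} (hT : IsFusionSeq T)
include hT

lemma isSubseq_of_le {k m : ℕ} (hkm : k ≤ m) : IsSubseq (T m) (T k) :=
  _root_.isSubseq_of_le (fun k => (hT k).trans (isSubseq_comp _ (strictMono_id.add_const 1))) hkm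

lemma isSubseq_tail_of_lt {k m : ℕ} (hkm : k < m) : IsSubseq (T m) (T k ∘ (· + 1)) :=
  (hT.isSubseq_of_le hkm).trans (hT k)

variable (hT0 : StrictMono (T 0))
include hT0

lemma strictMono (k : ℕ) : StrictMono (T k) :=
  (hT.isSubseq_of_le (Nat.zero_le k)).strictMono hT0

lemma strictMono_heads : StrictMono fun k => T k 0 := fun k m hkm => by
  obtain ⟨i, hi⟩ := (hT.isSubseq_tail_of_lt hkm).mem_range 0
  show T k 0 < T m 0
  rw [← hi]
  exact hT.strictMono hT0 k (Nat.succ_pos i)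

lemma heads_isSubseq {ψ : ℕ → ℕ} (hψ : StrictMono ψ) (hN : StrictMono N)
    (h : ∀ j, IsSubseq (T (ψ j)) N) : IsSubseq (fun j => T (ψ j) 0) N :=
  isSubseq_of_forall_mem_range hN ((hT.strictMono_heads hT0).comp hψ) fun j => (h j).mem_range 0

end IsFusionSeq

/-- Let `T (k + 1) ⊆ T k` decide `s ++ [T k 0]`. If infinitely many `T (k + 1)` reject, the
corresponding heads `T k 0` form `N`; if almost all accept, the heads of almost all `T k` form a
subsequence of `M` accepting `s`. -/
lemma exists_isSubseq_rejectsExtensions (hM : StrictMono M) (hs : Rejects Bad s M) :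
    ∃ N, IsSubseq N M ∧ RejectsExtensions Bad s N := by
  choose next hnext hdec using fun T : ℕ → ℕ =>
    exists_isSubseq_accepts_or_rejects (Bad := Bad) (s ++ [T 0]) (T ∘ (· + 1))
  obtain ⟨T, rfl, hTsucc⟩ : ∃ T : ℕ → ℕ → ℕ, T 0 = M ∧ ∀ k, T (k + 1) = next (T k) :=
    ⟨fun k => Nat.rec M (fun _ T => next T) k, rfl, fun _ => rfl⟩
  have hT : IsFusionSeq T := fun k => hTsucc k ▸ hnext (T k)
  have hTdec : ∀ k, Accepts Bad (s ++ [T k 0]) (T (k + 1)) ∨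
      Rejects Bad (s ++ [T k 0]) (T (k + 1)) := fun k => hTsucc k ▸ hdec (T k)
  by_cases hrej : ∃ᶠ k in atTop, Rejects Bad (s ++ [T k 0]) (T (k + 1))
  · obtain ⟨ψ, hψ, hψrej⟩ := extraction_of_frequently_atTop hrej
    refine ⟨fun j => T (ψ j) 0, hT.heads_isSubseq hM hψ hM fun j =>
      hT.isSubseq_of_le (Nat.zero_le _), fun j => (hψrej j).of_isSubseq ?_⟩
    refine hT.heads_isSubseq hM (hψ.comp (strictMono_id.add_const (j + 1))) (hT.strictMono hM _)
      fun t => hT.isSubseq_of_le (hψ (show j < t + (j + 1) by omega))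
  · obtain ⟨k₀, hk₀⟩ := eventually_atTop.mp (not_frequently.mp hrej)
    have hL : IsSubseq (fun t => T (k₀ + t) 0) (T 0) :=
      hT.heads_isSubseq hM (strictMono_id.const_add k₀) hM fun t =>
        hT.isSubseq_of_le (Nat.zero_le _)
    refine (hs _ hL (accepts_of_forall_accepts_append fun t => ?_)).elim
    refine ((hTdec (k₀ + t)).resolve_right (hk₀ _ (by omega))).of_isSubseq ?_
    exact hT.heads_isSubseq hM
      (fun a b hab => show k₀ + (a + (t + 1)) < k₀ + (b + (t + 1)) by omega) (hT.strictMono hM _)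
      fun i => hT.isSubseq_of_le (show k₀ + t + 1 ≤ k₀ + (i + (t + 1)) by omega)

lemma exists_isSubseq_forall_rejectsExtensions (hM : StrictMono M) (ts : List (List ℕ))
    (h : ∀ t ∈ ts, Rejects Bad t M) : ∃ N, IsSubseq N M ∧ ∀ t ∈ ts, RejectsExtensions Bad t N := by
  induction ts with
  | nil => exact ⟨M, .refl M, by simp⟩
  | cons t ts ih =>
    obtain ⟨N, hN, hts⟩ := ih fun u hu => h u (List.mem_cons_of_mem _ hu)
    obtain ⟨_, ⟨g, hg, rfl⟩, ht⟩ :=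
      exists_isSubseq_rejectsExtensions (hN.strictMono hM) ((h t List.mem_cons_self).of_isSubseq hN)
    refine ⟨N ∘ g, (isSubseq_comp N hg).trans hN, fun u hu => ?_⟩
    rcases List.mem_cons.mp hu with rfl | hu
    · exact ht
    · exact (hts u hu).comp hg

lemma exists_isSubseq_rejectsSublists_append {F : List ℕ} (hM : StrictMono M)
    (h : RejectsSublists Bad F M) :
    ∃ N, IsSubseq N (M ∘ (· + 1)) ∧ RejectsSublists Bad (F ++ [M 0]) N := by
  have hrej : ∀ t, t.Sublist (F ++ [M 0]) → Rejects Bad t (M ∘ (· + 1)) := by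
    intro t ht
    obtain ⟨t₁, t₂, rfl, ht₁, ht₂⟩ := List.sublist_append_iff.mp ht
    rcases List.sublist_singleton.mp ht₂ with rfl | rfl
    · simpa using (h t₁ ht₁).1.of_isSubseq (isSubseq_comp M (strictMono_id.add_const 1))
    · exact (h t₁ ht₁).2 0
  obtain ⟨N, hN, hext⟩ := exists_isSubseq_forall_rejectsExtensions
    (hM.comp (strictMono_id.add_const 1)) (F ++ [M 0]).sublists
    fun t ht => hrej t (List.mem_sublists.mp ht)
  exact ⟨N, hN, fun t ht => ⟨(hrej t ht).of_isSubseq hN, hext t (List.mem_sublists.mpr ht)⟩⟩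

/-- Fusion: build a fusion sequence `T` in which `T k` rejects every sublist of its first `k`
heads. A bad list `t` of heads would be accepted by the `T k` coming after it. -/
lemma exists_strictMono_forall_not_hits (hM : StrictMono M) (h : Rejects Bad [] M) :
    ∃ e, StrictMono e ∧ ∀ N, IsSubseq N e → ¬ Hits Bad [] N := by
  obtain ⟨T₀, hT₀, hT₀ext⟩ := exists_isSubseq_rejectsExtensions hM h
  obtain ⟨p, hp0, hp, hpsucc⟩ := exists_seq_of_forall_exists_rel
    (P := fun p : List ℕ × (ℕ → ℕ) => StrictMono p.2 ∧ RejectsSublists Bad p.1 p.2)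
    (R := fun p q => q.1 = p.1 ++ [p.2 0] ∧ IsSubseq q.2 (p.2 ∘ (· + 1))) ([], T₀)
    ⟨hT₀.strictMono hM, fun t ht => by
      obtain rfl := List.sublist_nil.mp ht
      exact ⟨h.of_isSubseq hT₀, hT₀ext⟩⟩
    fun p hp => by
      obtain ⟨T, hT, hTF⟩ := exists_isSubseq_rejectsSublists_append hp.1 hp.2
      exact ⟨(p.1 ++ [p.2 0], T), ⟨hT.strictMono (hp.1.comp (strictMono_id.add_const 1)), hTF⟩,
        rfl, hT⟩
  have he := IsFusionSeq.strictMono_heads (T := fun k => (p k).2) (fun k => (hpsucc k).2) (hp 0).1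
  have hF : ∀ k, (p k).1 = (List.range k).map fun k => (p k).2 0 := by
    intro k
    induction k with
    | zero => simp [hp0]
    | succ k ih =>
      rw [(hpsucc k).1, ih, List.range_succ, List.map_append]
      rfl
  refine ⟨_, he, ?_⟩
  rintro _ ⟨g, hg, rfl⟩ ⟨n, hbad⟩
  have hsub := hF (g n) ▸ map_range_comp_sublist _ hg n
  exact ((hp (g n)).2 _ hsub).1 _ (.refl _) fun _ _ => ⟨0, by simpa using hbad⟩

end NashWilliams

open NashWilliams in
theorem nash_williams (Bad : List ℕ → Prop) :
    ∃ e, StrictMono e ∧ ((∀ N, IsSubseq N e → ∃ n, Bad ((List.range n).map N)) ∨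
      ∀ N, IsSubseq N e → ∀ n, ¬ Bad ((List.range n).map N)) := by
  obtain ⟨M, hM, hacc | hrej⟩ := exists_isSubseq_accepts_or_rejects (Bad := Bad) [] id
  · exact ⟨M, hM.strictMono strictMono_id, Or.inl (hacc · ·)⟩
  · obtain ⟨e, he, hnot⟩ := exists_strictMono_forall_not_hits (hM.strictMono strictMono_id) hrej
    exact ⟨e, he, Or.inr fun N hN n hn => hnot N hN ⟨n, hn⟩⟩

/-- Rosenthal's dichotomy: a subsequence of pairs of sets that is independent or convergent. -/
theorem exists_strictMono_independent_or_convergent {S : Type*} (A B : ℕ → Set S) :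
    ∃ e : ℕ → ℕ, StrictMono e ∧
      ((∀ F G : Finset ℕ, Disjoint F G → ∃ s, (∀ i ∈ F, s ∈ A (e i)) ∧ ∀ j ∈ G, s ∈ B (e j)) ∨
        ∀ s, ¬((∃ᶠ n in atTop, s ∈ A (e n)) ∧ ∃ᶠ n in atTop, s ∈ B (e n))) := by
  obtain ⟨e, he, hall | hnone⟩ := nash_williams fun l =>
    ∀ s, ¬ ∀ i (h : i < l.length), s ∈ if Even i then A l[i] else B l[i]
  · refine ⟨e, he, Or.inr ?_⟩
    rintro s ⟨hA, hB⟩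
    obtain ⟨g, hg, hgs⟩ := extraction_forall_of_frequently
      (P := fun i n => s ∈ if Even i then A (e n) else B (e n)) fun i => by
        split_ifs
        exacts [hA, hB]
    obtain ⟨n, hn⟩ := hall _ (isSubseq_comp e hg)
    exact hn s fun i hi => by simpa using hgs i
  · refine ⟨e ∘ (3 * · + 1), he.comp fun a b hab => by omega, Or.inl fun F G hFG => ?_⟩
    obtain ⟨m, hm⟩ := (F ∪ G).exists_nat_subset_range
    -- `g` enumerates `3 * i + 1` at an even position if `i ∉ G` and at an odd one if `i ∈ G`
    let g : ℕ → ℕ := fun q => 3 * (q / 2) + q % 2 + if q / 2 ∈ G then 0 else 1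
    have hg : StrictMono g := strictMono_nat_of_lt_succ fun q => by
      rcases Nat.even_or_odd' q with ⟨i, rfl | rfl⟩
      · simp only [g, show 2 * i / 2 = i by omega, show (2 * i + 1) / 2 = i by omega]
        split_ifs <;> omega
      · simp only [g, show (2 * i + 1) / 2 = i by omega, show (2 * i + 1 + 1) / 2 = i + 1 by omega]
        split_ifs <;> omega
    have hmem : ∀ i, i ∈ F ∪ G → i < m := fun i hi => Finset.mem_range.mp (hm hi)
    obtain ⟨s, hs⟩ := not_forall_not.mp (hnone _ (isSubseq_comp e hg) (2 * m))
    refine ⟨s, fun i hi => ?_, fun j hj => ?_⟩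
    · have := hs (2 * i) (by simpa using hmem i (Finset.mem_union_left _ hi))
      simpa [g, Finset.disjoint_left.mp hFG hi] using this
    · have hjm := hmem j (Finset.mem_union_right _ hj)
      have := hs (2 * j + 1) (by simp; omega)
      simpa [g, hj, Nat.even_add_one, show (2 * j + 1) / 2 = j by omega,
        show (2 * j + 1) % 2 = 1 by omega] using this

section Banach

variable {X : Type*} [NormedAddCommGroup X] [NormedSpace ℝ X]

lemma isEquivL1Basis_of_lower_bound {x : ℕ → X} {M c : ℝ} (hM : ∀ n, ‖x n‖ ≤ M) (hc : 0 < c)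
    (h : ∀ (s : Finset ℕ) (b : ℕ → ℝ), c * ∑ i ∈ s, |b i| ≤ ‖∑ i ∈ s, b i • x i‖) :
    IsEquivL1Basis x := by
  refine ⟨c, M + 1, hc, by linarith [(norm_nonneg _).trans (hM 0)], fun n a => ⟨?_, ?_⟩⟩
  · simpa [Finset.sum_range] using h (Finset.range n) fun i => if hi : i < n then a ⟨i, hi⟩ else 0
  · calc ‖∑ i, a i • x i‖ ≤ ∑ i, ‖a i • x i‖ := norm_sum_le _ _
      _ ≤ ∑ i, (M + 1) * |a i| := Finset.sum_le_sum fun i _ => by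
        rw [norm_smul, Real.norm_eq_abs, mul_comm]
        gcongr
        linarith [hM i]
      _ = (M + 1) * ∑ i, |a i| := (Finset.mul_sum _ _ _).symm

/-- Test `∑ bᵢ xᵢ` against a functional that is below `r` where `bᵢ < 0` and above `r'` where
`0 ≤ bᵢ`, and against one doing the opposite. -/
lemma isEquivL1Basis_of_independent_s13 {x : ℕ → X} {M r r' : ℝ} (hM : ∀ n, ‖x n‖ ≤ M) (hr : r < r')
    (h : ∀ F G : Finset ℕ, Disjoint F G → ∃ f : X →L[ℝ] ℝ, ‖f‖ ≤ 1 ∧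
      (∀ i ∈ F, f (x i) < r) ∧ ∀ j ∈ G, r' < f (x j)) :
    IsEquivL1Basis x := by
  refine isEquivL1Basis_of_lower_bound hM (c := (r' - r) / 2) (by linarith) fun s b => ?_
  have hdisj : Disjoint (s.filter (b · < 0)) (s.filter (0 ≤ b ·)) :=
    Finset.disjoint_filter.mpr fun i _ hneg hnonneg => (not_lt.mpr hnonneg) hneg
  obtain ⟨f, hf, hfF, hfG⟩ := h _ _ hdisj
  obtain ⟨f', hf', hf'F, hf'G⟩ := h _ _ hdisj.symm
  have hterm : ∀ i ∈ s, (r' - r) * |b i| ≤ b i * (f (x i) - f' (x i)) := by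
    intro i hi
    rcases lt_or_ge (b i) 0 with hb | hb
    · have := hfF i (Finset.mem_filter.mpr ⟨hi, hb⟩)
      have := hf'G i (Finset.mem_filter.mpr ⟨hi, hb⟩)
      rw [abs_of_neg hb]
      nlinarith
    · have := hfG i (Finset.mem_filter.mpr ⟨hi, hb⟩)
      have := hf'F i (Finset.mem_filter.mpr ⟨hi, hb⟩)
      rw [abs_of_nonneg hb]
      nlinarith
  set y := ∑ i ∈ s, b i • x i
  have hy : f y - f' y = ∑ i ∈ s, b i * (f (x i) - f' (x i)) := by
    simp [y, map_sum, mul_sub, Finset.sum_sub_distrib]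
  have hbound : ∀ g : X →L[ℝ] ℝ, ‖g‖ ≤ 1 → |g y| ≤ ‖y‖ := fun g hg => by
    simpa using g.le_of_opNorm_le hg y
  have := Finset.mul_sum s (fun i => |b i|) (r' - r) ▸ Finset.sum_le_sum hterm
  linarith [abs_le.mp (hbound f hf), abs_le.mp (hbound f' hf')]

def NoWeakUpcrossings (y : ℕ → X) (a b : ℝ) : Prop :=
  ∀ f : X →L[ℝ] ℝ, ‖f‖ ≤ 1 → ¬((∃ᶠ n in atTop, f (y n) < a) ∧ ∃ᶠ n in atTop, b < f (y n))

lemma NoWeakUpcrossings.comp {y : ℕ → X} {a b : ℝ} (h : NoWeakUpcrossings y a b) {g : ℕ → ℕ}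
    (hg : StrictMono g) : NoWeakUpcrossings (y ∘ g) a b :=
  fun f hf ⟨h₁, h₂⟩ => h f hf ⟨hg.tendsto_atTop.frequently h₁, hg.tendsto_atTop.frequently h₂⟩

lemma noWeakUpcrossings_of_comp_add {y : ℕ → X} {a b : ℝ} {c : ℕ}
    (h : NoWeakUpcrossings (y ∘ (· + c)) a b) : NoWeakUpcrossings y a b := by
  intro f hf hfreq
  rw [← map_add_atTop_eq_nat c, frequently_map, frequently_map] at hfreq
  exact h f hf hfreq

lemma isWeaklyCauchy_of_noWeakUpcrossings {y : ℕ → X} {M : ℝ} (hM : ∀ n, ‖y n‖ ≤ M)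
    (h : ∀ a b : ℚ, a < b → NoWeakUpcrossings y a b) : IsWeaklyCauchy y := by
  intro f
  set g := (‖f‖ + 1)⁻¹ • f
  have hg : ‖g‖ ≤ 1 := by
    rw [norm_smul, norm_inv, Real.norm_of_nonneg (by positivity), inv_mul_le_one₀ (by positivity)]
    linarith
  have hbdd : ∀ n, |g (y n)| ≤ M := fun n => by
    simpa using (g.le_of_opNorm_le hg (y n)).trans (by simpa using hM n)
  obtain ⟨l, hl⟩ := tendsto_of_no_upcrossings Rat.denseRange_cast (u := fun n => g (y n))
    (by
      rintro _ ⟨a, rfl⟩ _ ⟨b, rfl⟩ hab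
      exact h a b (by exact_mod_cast hab) g hg)
    (isBoundedUnder_of ⟨M, fun n => (abs_le.mp (hbdd n)).2⟩)
    (isBoundedUnder_of ⟨-M, fun n => (abs_le.mp (hbdd n)).1⟩)
  refine ⟨(‖f‖ + 1) * l, ?_⟩
  have hfg : ∀ n, f (y n) = (‖f‖ + 1) * g (y n) := fun n => by
    simp only [g, smul_apply, smul_eq_mul]
    field_simp
  simpa [hfg] using hl.const_mul (‖f‖ + 1)

lemma WeaklyPrecompact.exists_strictMono_noWeakUpcrossings {A : Set X} (hA : WeaklyPrecompact A)
    {y : ℕ → X} (hy : ∀ n, y n ∈ A) {a b : ℝ} (hab : a < b) :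
    ∃ e, StrictMono e ∧ NoWeakUpcrossings (y ∘ e) a b := by
  obtain ⟨M, hM⟩ := isBounded_iff_forall_norm_le.mp hA.1
  obtain ⟨e, he, hind | hconv⟩ := exists_strictMono_independent_or_convergent
    (fun n => {f : Metric.closedBall (0 : X →L[ℝ] ℝ) 1 | (f : X →L[ℝ] ℝ) (y n) < a})
    (fun n => {f : Metric.closedBall (0 : X →L[ℝ] ℝ) 1 | b < (f : X →L[ℝ] ℝ) (y n)})
  · refine absurd (isEquivL1Basis_of_independent_s13 (fun n => hM _ (hy (e n))) hab fun F G hFG => ?_)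
      (hA.2 _ fun n => hy (e n))
    obtain ⟨f, hfF, hfG⟩ := hind F G hFG
    exact ⟨f, mem_closedBall_zero_iff.mp f.2, hfF, hfG⟩
  · exact ⟨e, he, fun f hf => hconv ⟨f, mem_closedBall_zero_iff.mpr hf⟩⟩

theorem WeaklyPrecompact.exists_isWeaklyCauchy_subseq {A : Set X} (hA : WeaklyPrecompact A)
    {x : ℕ → X} (hx : ∀ n, x n ∈ A) : ∃ φ, StrictMono φ ∧ IsWeaklyCauchy (x ∘ φ) := by
  obtain ⟨M, hM⟩ := isBounded_iff_forall_norm_le.mp hA.1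
  obtain ⟨q, hq⟩ := exists_surjective_nat (ℚ × ℚ)
  obtain ⟨φ, hφ, hφq⟩ := exists_strictMono_forall_of_diagonal
    (P := fun k d => ((q k).1 : ℝ) < (q k).2 → NoWeakUpcrossings (x ∘ d) (q k).1 (q k).2)
    (fun k d g hg h hlt => (h hlt).comp hg)
    (fun k d c h hlt => noWeakUpcrossings_of_comp_add (h hlt))
    fun k d => by
      by_cases hlt : ((q k).1 : ℝ) < (q k).2
      · obtain ⟨e, he, h⟩ := hA.exists_strictMono_noWeakUpcrossings (fun n => hx (d n)) hlt
        exact ⟨e, he, fun _ => h⟩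
      · exact ⟨id, strictMono_id, fun h => absurd h hlt⟩
  refine ⟨φ, hφ, isWeaklyCauchy_of_noWeakUpcrossings (fun n => hM _ (hx _)) fun a b hab => ?_⟩
  obtain ⟨k, hk⟩ := hq (a, b)
  simpa [hk] using hφq k (by simpa [hk] using hab)

lemma exists_dual_comp_eq {V : Type*} [AddCommGroup V] [Module ℝ V] (T : V →ₗ[ℝ] X)
    (g : V →ₗ[ℝ] ℝ) {C : ℝ} (h : ∀ v, |g v| ≤ C * ‖T v‖) :
    ∃ F : X →L[ℝ] ℝ, ∀ v, F (T v) = g v := by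
  have hker : LinearMap.ker T ≤ LinearMap.ker g := fun v hv => by
    simpa [LinearMap.mem_ker.mp hv] using h v
  let G : LinearMap.range T →ₗ[ℝ] ℝ :=
    (LinearMap.ker T).liftQ g hker ∘ₗ T.quotKerEquivRange.symm.toLinearMap
  have hG : ∀ v, G ⟨T v, v, rfl⟩ = g v := fun v => by
    have : T.quotKerEquivRange.symm ⟨T v, v, rfl⟩ = Submodule.Quotient.mk v :=
      (LinearEquiv.symm_apply_eq _).mpr <| Subtype.ext (T.quotKerEquivRange_apply_mk v).symm
    simp [G, this]
  obtain ⟨F, hF, -⟩ := exists_extension_norm_eq _ (G.mkContinuous C fun y => by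
    obtain ⟨_, v, rfl⟩ := y
    simpa [hG] using h v)
  exact ⟨F, fun v => (hF ⟨T v, v, rfl⟩).trans (hG v)⟩

lemma IsEquivL1Basis.lower_bound_finsupp {x : ℕ → X} (hx : IsEquivL1Basis x) :
    ∃ c > 0, ∀ a : ℕ →₀ ℝ, c * (a.sum fun _ t => |t|) ≤ ‖Finsupp.linearCombination ℝ x a‖ := by
  obtain ⟨c, _, hc, -, h⟩ := hx
  refine ⟨c, hc, fun a => ?_⟩
  obtain ⟨n, hn⟩ := a.support.exists_nat_subset_range
  rw [Finsupp.linearCombination_apply, Finsupp.sum_of_support_subset a hn _ (by simp),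
    Finsupp.sum_of_support_subset a hn _ (by simp), Finset.sum_range, Finset.sum_range]
  exact (h n fun i => a i).1

lemma IsEquivL1Basis.exists_dual_apply_eq_s13 {x : ℕ → X} (hx : IsEquivL1Basis x) {ε : ℕ → ℝ} {K : ℝ}
    (hε : ∀ i, |ε i| ≤ K) : ∃ F : X →L[ℝ] ℝ, ∀ i, F (x i) = ε i := by
  obtain ⟨c, hc, hlow⟩ := hx.lower_bound_finsupp
  obtain ⟨F, hF⟩ := exists_dual_comp_eq (Finsupp.linearCombination ℝ x)
    (Finsupp.linearCombination ℝ ε) (C := K / c) fun a => by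
      have hK : 0 ≤ K := (abs_nonneg _).trans (hε 0)
      calc |Finsupp.linearCombination ℝ ε a| ≤ a.sum fun i t => |t| * K := by
            rw [Finsupp.linearCombination_apply]
            refine (Finset.abs_sum_le_sum_abs _ _).trans (Finset.sum_le_sum fun i _ => ?_)
            dsimp only
            rw [smul_eq_mul, abs_mul]
            gcongr
            exact hε i
        _ = K / c * (c * a.sum fun _ t => |t|) := by
            rw [← Finsupp.sum_mul]
            field_simp
        _ ≤ K / c * ‖Finsupp.linearCombination ℝ x a‖ := by
            gcongr
            exact hlow a
  exact ⟨F, fun i => by simpa using hF (Finsupp.single i 1)⟩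

theorem IsEquivL1Basis.not_isWeaklyCauchy_comp {x : ℕ → X} (hx : IsEquivL1Basis x) {φ : ℕ → ℕ}
    (hφ : StrictMono φ) : ¬ IsWeaklyCauchy (x ∘ φ) := by
  intro hwc
  obtain ⟨F, hF⟩ := hx.exists_dual_apply_eq_s13 (ε := (Set.range fun k => φ (2 * k)).indicator 1)
    (K := 1) fun i => by
      by_cases hi : i ∈ Set.range fun k => φ (2 * k) <;> simp [hi]
  have heven : ∀ k, F (x (φ (2 * k))) = 1 := fun k => by
    rw [hF]
    exact Set.indicator_of_mem (Set.mem_range_self k) _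
  have hodd : ∀ k, F (x (φ (2 * k + 1))) = 0 := fun k => by
    rw [hF]
    refine Set.indicator_of_notMem ?_ _
    rintro ⟨j, hj⟩
    have := hφ.injective hj
    omega
  obtain ⟨l, hl⟩ := hwc F
  have h₁ := hl.comp (StrictMono.tendsto_atTop fun a b (h : a < b) => show 2 * a < 2 * b by omega)
  have h₀ := hl.comp (StrictMono.tendsto_atTop fun a b (h : a < b) =>
    show 2 * a + 1 < 2 * b + 1 by omega)
  simp only [Function.comp_def, heven, hodd] at h₁ h₀
  exact one_ne_zero ((tendsto_nhds_unique tendsto_const_nhds h₁).trans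
    (tendsto_nhds_unique h₀ tendsto_const_nhds))

end Banach

theorem stmt13_general (X : Type*) [NormedAddCommGroup X] [NormedSpace ℝ X]
    (A : Set X) (hA : Bornology.IsBounded A) :
    WeaklyPrecompact A ↔
      ∀ x : ℕ → X, (∀ n, x n ∈ A) →
        ∃ φ : ℕ → ℕ, StrictMono φ ∧ IsWeaklyCauchy (x ∘ φ) := by
  refine ⟨fun hWP x hx => hWP.exists_isWeaklyCauchy_subseq hx, fun h => And.intro hA ?_⟩
  intro x hx hx1
  obtain ⟨φ, hφ, hφx⟩ := h x hx
  exact hx1.not_isWeaklyCauchy_comp hφ hφx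

/-- A bounded subset `A` of a real Banach space is weakly precompact if and only if
every sequence in `A` has a weakly Cauchy subsequence. (Rosenthal's `ℓ₁` theorem.) -/
theorem stmt13 (X : Type*) [NormedAddCommGroup X] [NormedSpace ℝ X] [CompleteSpace X]
    (A : Set X) (hA : Bornology.IsBounded A) :
    WeaklyPrecompact A ↔
      ∀ x : ℕ → X, (∀ n, x n ∈ A) →
        ∃ φ : ℕ → ℕ, StrictMono φ ∧ IsWeaklyCauchy (x ∘ φ) :=
  stmt13_general X A hA
end
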